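/- arXiv:1404.5184 — 8 statements merged into one kernel-verified Lean document; each statement's English description precedes it below -/
import Mathlib

section
/- Let R be a tolerance (reflexive symmetric relation) on U and x ∈ U. The neighbourhood R(x) is an R-block (maximal R-preblock) if and only if every two elements a, b ∈ R(x) satisfy a R b. -/
variable {α : Type*}

/-- The `R`-neighbourhood of `x`. -/
def nbhd (R : α → α → Prop) (x : α) : Set α := {y | R x y}

/-- A nonempty set all of whose pairs are related: an `R`-preblock. -/
def IsPreblock (R : α → α → Prop) (X : Set α) : Prop :=
  X.Nonempty ∧ ∀ a ∈ X, ∀ b ∈ X, R a b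

/-- An `R`-block: a maximal `R`-preblock. -/
def IsBlock (R : α → α → Prop) (B : Set α) : Prop :=
  IsPreblock R B ∧ ∀ X, IsPreblock R X → B ⊆ X → B = X

/-- A covering of the universe by nonempty sets. -/
def IsCovering (H : Set (Set α)) : Prop :=
  (∀ X ∈ H, X.Nonempty) ∧ ⋃₀ H = Set.univ

/-- An irredundant covering: no member can be removed. -/
def IsIrredundant (H : Set (Set α)) : Prop :=
  IsCovering H ∧ ∀ X ∈ H, ¬ IsCovering (H \ {X})

/-- The family `H` induces the relation `R`. -/
def Induces (H : Set (Set α)) (R : α → α → Prop) : Prop :=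
  ∀ a b, R a b ↔ ∃ X ∈ H, a ∈ X ∧ b ∈ X

/-- Minimal element of a quasiorder. -/
def QMinimal (le : α → α → Prop) (m : α) : Prop := ∀ y, le y m → le m y

/-- Upset of an element. -/
def upset (le : α → α → Prop) (m : α) : Set α := {y | le m y}

/-- The tolerance `≈ = ≳ ∘ ≲` determined by a quasiorder. -/
def approx (le : α → α → Prop) (x y : α) : Prop := ∃ a, le a x ∧ le a y

/-- Bounded by minimal elements. -/
def BoundedByMinimals (le : α → α → Prop) : Prop :=
  ∀ x, ∃ m, QMinimal le m ∧ le m x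

/-- The quasiorder `≲_R` determined by a tolerance. -/
def tolLe (R : α → α → Prop) (x y : α) : Prop := nbhd R x ⊆ nbhd R y

/-- Helly number 2 for a quasiordered set. -/
def Helly2 (le : α → α → Prop) : Prop :=
  ∀ A : Set α, A.Nonempty → (∀ x ∈ A, ∀ y ∈ A, ∃ a, le a x ∧ le a y) →
    ∃ a, ∀ x ∈ A, le a x

/-- A canonical base: a family of `R`-blocks inducing `R`, no member removable. -/
def CanonicalBase (R : α → α → Prop) (K : Set (Set α)) : Prop :=
  (∀ X ∈ K, IsBlock R X) ∧ Induces K R ∧ ∀ X ∈ K, ¬ Induces (K \ {X}) R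

theorem IsPreblock.subset_nbhd {R : α → α → Prop} {X : Set α} {x : α}
    (hX : IsPreblock R X) (hx : x ∈ X) : X ⊆ nbhd R x :=
  fun _ hy ↦ hX.2 x hx _ hy

theorem isBlock_nbhd_iff {R : α → α → Prop} {x : α} (hx : R x x) :
    IsBlock R (nbhd R x) ↔ IsPreblock R (nbhd R x) :=
  ⟨And.left, fun hpre ↦ ⟨hpre, fun _ hX hsub ↦ hsub.antisymm (hX.subset_nbhd (hsub hx))⟩⟩

theorem stmt0_general (R : α → α → Prop) (hrefl : Reflexive R) (x : α) :
    IsBlock R (nbhd R x) ↔ ∀ a ∈ nbhd R x, ∀ b ∈ nbhd R x, R a b := by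
  rw [isBlock_nbhd_iff (hrefl x)]
  exact ⟨And.right, fun hpair ↦ ⟨⟨x, hrefl x⟩, hpair⟩⟩

theorem stmt0 (R : α → α → Prop) (hrefl : Reflexive R) (hsymm : Symmetric R) (x : α) :
    IsBlock R (nbhd R x) ↔ ∀ a ∈ nbhd R x, ∀ b ∈ nbhd R x, R a b :=
  stmt0_general R hrefl x
end

section
/- Let R be a tolerance induced by a covering H of U. Then H is irredundant if and only if every member of H is of the form R(x) for some x ∈ U. -/
/-!
A member `X` of a covering is indispensable exactly when some point `u` lies in no other member,
and then `R(u) = X`, since every member through `u` is `X`. Conversely, if every member is a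
neighbourhood, then `x ∈ R(x)` and any member `R(z)` through `x` equals `R(x)`, so `x` witnesses
that `R(x)` cannot be removed.
-/

variable {α : Type*}

namespace IsCovering

variable {H : Set (Set α)}

theorem exists_mem (hH : IsCovering H) (x : α) : ∃ X ∈ H, x ∈ X :=
  Set.mem_sUnion.1 (hH.2.symm ▸ Set.mem_univ x)

theorem isCovering_diff_singleton_iff (hH : IsCovering H) (X : Set α) :
    IsCovering (H \ {X}) ↔ ∀ u, ∃ Y ∈ H, Y ≠ X ∧ u ∈ Y := by
  refine ⟨fun h u => ?_, fun h => ⟨fun Y hY => hH.1 Y hY.1, ?_⟩⟩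
  · obtain ⟨Y, ⟨hY, hYX⟩, huY⟩ := h.exists_mem u
    exact ⟨Y, hY, hYX, huY⟩
  · refine Set.eq_univ_of_forall fun u => ?_
    obtain ⟨Y, hY, hYX, huY⟩ := h u
    exact ⟨Y, ⟨hY, hYX⟩, huY⟩

theorem isIrredundant_iff (hH : IsCovering H) :
    IsIrredundant H ↔ ∀ X ∈ H, ∃ u ∈ X, ∀ Y ∈ H, u ∈ Y → Y = X := by
  refine ⟨fun h X hX => ?_, fun h => ⟨hH, fun X hX => ?_⟩⟩
  · obtain ⟨u, hu⟩ := not_forall.1 (mt (hH.isCovering_diff_singleton_iff X).2 (h.2 X hX))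
    have huniq : ∀ Y ∈ H, u ∈ Y → Y = X := fun Y hY huY =>
      by_contra fun hYX => hu ⟨Y, hY, hYX, huY⟩
    obtain ⟨Y, hY, huY⟩ := hH.exists_mem u
    exact ⟨u, huniq Y hY huY ▸ huY, huniq⟩
  · obtain ⟨u, -, huniq⟩ := h X hX
    rw [hH.isCovering_diff_singleton_iff]
    exact fun hcov => (hcov u).elim fun Y ⟨hY, hYX, huY⟩ => hYX (huniq Y hY huY)

end IsCovering

namespace Induces

variable {H : Set (Set α)} {R : α → α → Prop}

theorem subset_nbhd (hind : Induces H R) {X : Set α} (hX : X ∈ H) {x : α} (hx : x ∈ X) :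
    X ⊆ nbhd R x :=
  fun y hy => (hind x y).2 ⟨X, hX, hx, hy⟩

theorem refl (hind : Induces H R) (hH : IsCovering H) (x : α) : R x x := by
  obtain ⟨X, hX, hx⟩ := hH.exists_mem x
  exact (hind x x).2 ⟨X, hX, hx, hx⟩

theorem nbhd_eq_of_unique_mem (hind : Induces H R) {X : Set α} (hX : X ∈ H) {u : α}
    (hu : u ∈ X) (huniq : ∀ Y ∈ H, u ∈ Y → Y = X) : nbhd R u = X := by
  refine (hind.subset_nbhd hX hu).antisymm' fun y hy => ?_
  obtain ⟨Y, hY, huY, hyY⟩ := (hind u y).1 hy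
  exact huniq Y hY huY ▸ hyY

/-- Any member `R(z) ∋ x` lies inside `R(x)`, hence contains `z`, hence contains `R(x)`. -/
theorem eq_nbhd_of_mem (hind : Induces H R) (hH : IsCovering H)
    (hnbhd : ∀ X ∈ H, ∃ x, X = nbhd R x) {x : α} (hx : nbhd R x ∈ H) {Y : Set α} (hY : Y ∈ H)
    (hxY : x ∈ Y) : Y = nbhd R x := by
  obtain ⟨z, rfl⟩ := hnbhd Y hY
  have hzx : nbhd R z ⊆ nbhd R x := hind.subset_nbhd hY hxY
  exact hzx.antisymm (hind.subset_nbhd hx (hzx (hind.refl hH z)))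

end Induces

theorem stmt7 (R : α → α → Prop) (H : Set (Set α))
    (hH : IsCovering H) (hind : Induces H R) :
    IsIrredundant H ↔ ∀ X ∈ H, ∃ x, X = nbhd R x := by
  rw [hH.isIrredundant_iff]
  refine ⟨fun h X hX => ?_, fun h X hX => ?_⟩
  · obtain ⟨u, hu, huniq⟩ := h X hX
    exact ⟨u, (hind.nbhd_eq_of_unique_mem hX hu huniq).symm⟩
  · obtain ⟨x, rfl⟩ := h X hX
    exact ⟨x, hind.refl hH x, fun Y hY hxY => hind.eq_nbhd_of_mem hH h hX hY hxY⟩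
end

section
/- Let ≲ be a quasiorder on U and let ≈ denote the tolerance ≳ ∘ ≲ (i.e., x ≈ y iff there exists a with a ≲ x and a ≲ y). If m is a minimal element of (U, ≲), then the neighbourhood ≈(m) equals the upset ↑m = {y : m ≲ y}, and ↑m is a block of ≈. -/
/-! Below a minimal `m`, every `a ≲ m` satisfies `m ≲ a`, so any `y` sharing a lower bound with `m`
lies above `m`: thus `≈(m) = ↑m`. A preblock containing `↑m` contains `m`, hence lies in `≈(m) = ↑m`. -/

variable {α : Type*}

theorem IsPreblock.isBlock_of_nbhd_subset {R : α → α → Prop} {B : Set α} {x : α}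
    (hB : IsPreblock R B) (hx : x ∈ B) (hsub : nbhd R x ⊆ B) : IsBlock R B :=
  ⟨hB, fun _ hX hBX => Set.Subset.antisymm hBX ((hX.subset_nbhd (hBX hx)).trans hsub)⟩

section

variable {le : α → α → Prop} {m y : α}

theorem isPreblock_approx_upset (hrefl : Reflexive le) (m : α) :
    IsPreblock (approx le) (upset le m) :=
  ⟨⟨m, hrefl m⟩, fun _ ha _ hb => ⟨m, ha, hb⟩⟩

theorem QMinimal.le_of_approx (htrans : Transitive le) (hm : QMinimal le m)
    (h : approx le m y) : le m y :=
  let ⟨_, ham, hay⟩ := h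
  htrans (hm _ ham) hay

theorem nbhd_approx_eq_upset (hrefl : Reflexive le) (htrans : Transitive le)
    (hm : QMinimal le m) : nbhd (approx le) m = upset le m :=
  Set.Subset.antisymm (fun _ => hm.le_of_approx htrans) fun _ hy => ⟨m, hrefl m, hy⟩

end

theorem stmt8 (le : α → α → Prop) (hrefl : Reflexive le) (htrans : Transitive le)
    (m : α) (hm : QMinimal le m) :
    nbhd (approx le) m = upset le m ∧ IsBlock (approx le) (upset le m) := by
  have hnbhd := nbhd_approx_eq_upset hrefl htrans hm
  exact ⟨hnbhd, (isPreblock_approx_upset hrefl m).isBlock_of_nbhd_subset (hrefl m) hnbhd.le⟩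
end

section
/- Let ≲ be a quasiorder on U that is bounded by minimal elements (every x has a minimal m with m ≲ x). Then H = {↑m : m minimal} is an irredundant covering of U, and the tolerance induced by H equals ≈ = ≳ ∘ ≲. -/
variable {α : Type*}

def minimalUpsets (le : α → α → Prop) : Set (Set α) :=
  {S | ∃ m, QMinimal le m ∧ S = upset le m}

theorem upset_eq_of_le_of_le {le : α → α → Prop} (htrans : Transitive le) {a b : α}
    (hab : le a b) (hba : le b a) : upset le a = upset le b :=
  Set.ext fun _ => ⟨htrans hba, htrans hab⟩

theorem upset_eq_of_le_of_qMinimal {le : α → α → Prop} (htrans : Transitive le) {a m : α}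
    (hm : QMinimal le m) (ham : le a m) : upset le a = upset le m :=
  upset_eq_of_le_of_le htrans ham (hm a ham)

theorem isCovering_minimalUpsets {le : α → α → Prop} (hrefl : Reflexive le)
    (hb : BoundedByMinimals le) : IsCovering (minimalUpsets le) := by
  refine ⟨?_, Set.eq_univ_of_forall fun x => ?_⟩
  · rintro _ ⟨m, -, rfl⟩
    exact ⟨m, hrefl m⟩
  · obtain ⟨m, hm, hmx⟩ := hb x
    exact ⟨upset le m, ⟨m, hm, rfl⟩, hmx⟩

theorem not_isCovering_minimalUpsets_diff {le : α → α → Prop} (htrans : Transitive le) {m : α}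
    (hm : QMinimal le m) : ¬ IsCovering (minimalUpsets le \ {upset le m}) := by
  rintro ⟨-, hcover⟩
  obtain ⟨_, ⟨⟨m', -, rfl⟩, hne⟩, hm'm⟩ := hcover.symm ▸ Set.mem_univ m
  exact hne (upset_eq_of_le_of_qMinimal htrans hm hm'm)

theorem isIrredundant_minimalUpsets {le : α → α → Prop} (hrefl : Reflexive le)
    (htrans : Transitive le) (hb : BoundedByMinimals le) : IsIrredundant (minimalUpsets le) := by
  refine ⟨isCovering_minimalUpsets hrefl hb, ?_⟩
  rintro _ ⟨m, hm, rfl⟩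
  exact not_isCovering_minimalUpsets_diff htrans hm

theorem induces_minimalUpsets_approx {le : α → α → Prop} (htrans : Transitive le)
    (hb : BoundedByMinimals le) : Induces (minimalUpsets le) (approx le) := by
  intro x y
  constructor
  · rintro ⟨a, hax, hay⟩
    obtain ⟨m, hm, hma⟩ := hb a
    exact ⟨upset le m, ⟨m, hm, rfl⟩, htrans hma hax, htrans hma hay⟩
  · rintro ⟨_, ⟨m, -, rfl⟩, hmx, hmy⟩
    exact ⟨m, hmx, hmy⟩

theorem stmt9 (le : α → α → Prop) (hrefl : Reflexive le) (htrans : Transitive le)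
    (hb : BoundedByMinimals le) :
    IsIrredundant {S | ∃ m, QMinimal le m ∧ S = upset le m} ∧
      Induces {S | ∃ m, QMinimal le m ∧ S = upset le m} (approx le) :=
  ⟨isIrredundant_minimalUpsets hrefl htrans hb, induces_minimalUpsets_approx htrans hb⟩
end

section
/- If a tolerance R on U is induced by an irredundant covering H, then H is a canonical base for R: H consists of R-blocks, H induces R, and for any X ∈ H the family H \ {X} does not induce R. -/
/-!
Irredundance gives every `X ∈ H` a private point `u`, lying in no other member. Since `H`
induces `R`, the neighbourhood of `u` is exactly `X`, so any preblock containing `X` is inside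
`X`; and `R u u` can only be witnessed by `X`, so `H \ {X}` no longer induces `R`.
-/

variable {α : Type*}

theorem IsIrredundant.exists_mem_forall_ne_notMem {H : Set (Set α)} (hH : IsIrredundant H)
    {X : Set α} (hX : X ∈ H) : ∃ u ∈ X, ∀ Y ∈ H, Y ≠ X → u ∉ Y := by
  obtain ⟨⟨hne, hcov⟩, hirr⟩ := hH
  have hnot_cover : ⋃₀ (H \ {X}) ≠ Set.univ := fun h => hirr X hX ⟨fun Y hY => hne Y hY.1, h⟩
  obtain ⟨u, hu⟩ := (Set.ne_univ_iff_exists_notMem _).1 hnot_cover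
  obtain ⟨Z, hZ, huZ⟩ := Set.mem_sUnion.1 (hcov ▸ Set.mem_univ u : u ∈ ⋃₀ H)
  have hZX : Z = X := by_contra fun hZX => hu ⟨Z, ⟨hZ, hZX⟩, huZ⟩
  exact ⟨u, hZX ▸ huZ, fun Y hY hYX huY => hu ⟨Y, ⟨hY, hYX⟩, huY⟩⟩

namespace Induces

variable {H : Set (Set α)} {R : α → α → Prop} {X : Set α} {u : α}

theorem isPreblock_of_mem (hind : Induces H R) (hX : X ∈ H) (hne : X.Nonempty) :
    IsPreblock R X :=
  ⟨hne, fun a ha b hb => (hind a b).2 ⟨X, hX, ha, hb⟩⟩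

theorem isBlock_of_forall_ne_notMem (hind : Induces H R) (hX : X ∈ H) (hu : u ∈ X)
    (honly : ∀ Y ∈ H, Y ≠ X → u ∉ Y) : IsBlock R X := by
  refine ⟨hind.isPreblock_of_mem hX ⟨u, hu⟩, fun B hB hXB => hXB.antisymm fun b hb => ?_⟩
  obtain ⟨Y, hY, huY, hbY⟩ := (hind u b).1 (hB.2 u (hXB hu) b hb)
  obtain rfl : Y = X := by_contra fun hYX => honly Y hY hYX huY
  exact hbY

theorem not_induces_diff_singleton (hind : Induces H R) (hX : X ∈ H) (hu : u ∈ X)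
    (honly : ∀ Y ∈ H, Y ≠ X → u ∉ Y) : ¬ Induces (H \ {X}) R := fun hind' => by
  obtain ⟨Y, ⟨hY, hYX⟩, huY, -⟩ := (hind' u u).1 ((hind u u).2 ⟨X, hX, hu, hu⟩)
  exact honly Y hY hYX huY

end Induces

theorem stmt13 (R : α → α → Prop) (H : Set (Set α))
    (hH : IsIrredundant H) (hind : Induces H R) :
    CanonicalBase R H := by
  refine ⟨fun X hX => ?_, hind, fun X hX => ?_⟩
  · obtain ⟨u, hu, honly⟩ := hH.exists_mem_forall_ne_notMem hX
    exact hind.isBlock_of_forall_ne_notMem hX hu honly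
  · obtain ⟨u, hu, honly⟩ := hH.exists_mem_forall_ne_notMem hX
    exact hind.not_induces_diff_singleton hX hu honly
end

section
/- For a quasiordered set (U, ≲), the following are equivalent: (a) the Helly number of (U, ≲) is 2; (b) B(≈) = {↑m : m minimal}; (c) B(≈) is an irredundant covering of U and (U, ≲) is bounded by minimal elements, where ≈ = ≳ ∘ ≲. -/
variable {α : Type*}

/-!
Blocks of `≈` always exist by Zorn's lemma, and for a minimal `m` the upset `↑m` is a block.
Helly number 2 says exactly that every block has a lower bound `a`; maximality of the block
then forces it to be `↑a` with `a` minimal. Conversely, in an irredundant covering by blocks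
each block `B` has a point `x` lying in no other block, and the block `↑m` of a minimal
`m ≲ x` must be `B`, so `m` is a lower bound of `B`.
-/

section Blocks

variable {R : α → α → Prop}

theorem IsPreblock.exists_isBlock_superset {X : Set α} (hX : IsPreblock R X) :
    ∃ B, IsBlock R B ∧ X ⊆ B := by
  have hchain : ∀ c ⊆ {Y | IsPreblock R Y}, IsChain (· ⊆ ·) c → c.Nonempty →
      ∃ ub ∈ {Y | IsPreblock R Y}, ∀ s ∈ c, s ⊆ ub := by
    rintro c hc hchain ⟨Y, hY⟩
    refine ⟨⋃₀ c, ⟨?_, ?_⟩, fun s hs => Set.subset_sUnion_of_mem hs⟩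
    · obtain ⟨y, hy⟩ := (hc hY).1
      exact ⟨y, Y, hY, hy⟩
    · rintro a ⟨Y₁, hY₁, ha⟩ b ⟨Y₂, hY₂, hb⟩
      rcases hchain.total hY₁ hY₂ with h | h
      · exact (hc hY₂).2 a (h ha) b hb
      · exact (hc hY₁).2 a ha b (h hb)
  obtain ⟨B, hXB, hB, hBmax⟩ := zorn_subset_nonempty {Y | IsPreblock R Y} hchain X hX
  exact ⟨B, ⟨hB, fun Z hZ hBZ => (hBmax hZ hBZ).antisymm hBZ |>.symm⟩, hXB⟩

theorem exists_isBlock_mem {x : α} (hx : R x x) : ∃ B, IsBlock R B ∧ x ∈ B := by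
  have hsingle : IsPreblock R {x} := ⟨⟨x, rfl⟩, by rintro a rfl b rfl; exact hx⟩
  obtain ⟨B, hB, hxB⟩ := hsingle.exists_isBlock_superset
  exact ⟨B, hB, hxB rfl⟩

theorem isCovering_setOf_isBlock (hR : Reflexive R) : IsCovering {B | IsBlock R B} :=
  ⟨fun _ hB => hB.1.1, Set.eq_univ_of_forall fun x =>
    let ⟨B, hB, hxB⟩ := exists_isBlock_mem (hR x); ⟨B, hB, hxB⟩⟩

theorem IsBlock.mem_of_forall {B : Set α} (hB : IsBlock R B) {z : α} (hzz : R z z)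
    (hz : ∀ x ∈ B, R z x ∧ R x z) : z ∈ B := by
  have hins : IsPreblock R (insert z B) := by
    refine ⟨⟨z, Set.mem_insert z B⟩, ?_⟩
    rintro u (rfl | hu) v (rfl | hv)
    exacts [hzz, (hz v hv).1, (hz u hu).2, hB.1.2 u hu v hv]
  exact hB.2 _ hins (Set.subset_insert z B) ▸ Set.mem_insert z B

end Blocks

theorem isIrredundant_iff {H : Set (Set α)} :
    IsIrredundant H ↔ IsCovering H ∧ ∀ X ∈ H, ∃ x ∈ X, ∀ Y ∈ H, x ∈ Y → Y = X := by
  refine and_congr_right fun hH => forall₂_congr fun X hX => ?_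
  constructor
  · intro hX'
    have : ∃ x, x ∉ ⋃₀ (H \ {X}) := by
      by_contra! h
      exact hX' ⟨fun Y hY => hH.1 Y hY.1, Set.eq_univ_of_forall h⟩
    obtain ⟨x, hx⟩ := this
    obtain ⟨Y, hY, hxY⟩ := Set.mem_sUnion.1 (hH.2.symm ▸ Set.mem_univ x : x ∈ ⋃₀ H)
    have hXY : ∀ Y ∈ H, x ∈ Y → Y = X := fun Y hY hxY =>
      by_contra fun hne => hx ⟨Y, ⟨hY, hne⟩, hxY⟩
    exact ⟨x, hXY Y hY hxY ▸ hxY, hXY⟩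
  · rintro ⟨x, -, hx⟩ ⟨-, hcov⟩
    obtain ⟨Y, ⟨hY, hYX⟩, hxY⟩ := Set.mem_sUnion.1 (hcov.symm ▸ Set.mem_univ x)
    exact hYX (hx Y hY hxY)

section Quasiorder

variable {le : α → α → Prop}

theorem approx_refl (hrefl : Reflexive le) : Reflexive (approx le) :=
  fun x => ⟨x, hrefl x, hrefl x⟩

theorem approx_symm : Symmetric (approx le) :=
  fun _ _ ⟨a, hax, hay⟩ => ⟨a, hay, hax⟩

theorem isBlock_upset (hrefl : Reflexive le) (htrans : Transitive le) {m : α}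
    (hm : QMinimal le m) : IsBlock (approx le) (upset le m) := by
  refine ⟨⟨⟨m, hrefl m⟩, fun a ha b hb => ⟨m, ha, hb⟩⟩, fun X hX hsub => ?_⟩
  refine hsub.antisymm fun x hx => ?_
  obtain ⟨a, ham, hax⟩ := hX.2 m (hsub (hrefl m)) x hx
  exact htrans (hm a ham) hax

theorem QMinimal.upset_eq_of_mem (htrans : Transitive le) {m m' : α} (hm : QMinimal le m)
    (hmm' : m ∈ upset le m') : upset le m' = upset le m :=
  Set.ext fun _ => ⟨fun hy => htrans (hm m' hmm') hy, fun hy => htrans hmm' hy⟩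

theorem helly2_iff_forall_isBlock : Helly2 le ↔
    ∀ B, IsBlock (approx le) B → ∃ a, ∀ x ∈ B, le a x := by
  refine ⟨fun hH B hB => hH B hB.1.1 hB.1.2, fun h A hA hApair => ?_⟩
  obtain ⟨B, hB, hAB⟩ := IsPreblock.exists_isBlock_superset (R := approx le) ⟨hA, hApair⟩
  obtain ⟨a, ha⟩ := h B hB
  exact ⟨a, fun x hx => ha x (hAB hx)⟩

theorem IsBlock.eq_upset_of_forall_le (hrefl : Reflexive le) (htrans : Transitive le)
    {B : Set α} (hB : IsBlock (approx le) B) {a : α} (ha : ∀ x ∈ B, le a x) :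
    QMinimal le a ∧ B = upset le a := by
  have mem_of_approx : ∀ z, (∀ x ∈ B, approx le z x) → z ∈ B := fun z hz =>
    hB.mem_of_forall (approx_refl hrefl z) fun x hx => ⟨hz x hx, approx_symm (hz x hx)⟩
  refine ⟨fun y hya => ha y (mem_of_approx y fun x hx => ⟨y, hrefl y, htrans hya (ha x hx)⟩),
    Set.Subset.antisymm ha fun z hz => mem_of_approx z fun x hx => ⟨a, hz, ha x hx⟩⟩

theorem Helly2.setOf_isBlock_eq (hrefl : Reflexive le) (htrans : Transitive le) (hH : Helly2 le) :
    {B | IsBlock (approx le) B} = {S | ∃ m, QMinimal le m ∧ S = upset le m} := by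
  ext B
  refine ⟨fun hB => ?_, fun ⟨m, hm, hBm⟩ => hBm ▸ isBlock_upset hrefl htrans hm⟩
  obtain ⟨a, ha⟩ := helly2_iff_forall_isBlock.1 hH B hB
  exact ⟨a, hB.eq_upset_of_forall_le hrefl htrans ha⟩

end Quasiorder

theorem stmt16 (le : α → α → Prop) (hrefl : Reflexive le) (htrans : Transitive le) :
    (Helly2 le ↔ {B | IsBlock (approx le) B} = {S | ∃ m, QMinimal le m ∧ S = upset le m}) ∧
    (Helly2 le ↔
      IsIrredundant {B | IsBlock (approx le) B} ∧ BoundedByMinimals le) := by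
  refine ⟨⟨Helly2.setOf_isBlock_eq hrefl htrans, fun hblocks => ?_⟩, ⟨fun hH => ?_, ?_⟩⟩
  · refine helly2_iff_forall_isBlock.2 fun B hB => ?_
    obtain ⟨m, -, rfl⟩ := hblocks.subset hB
    exact ⟨m, fun _ hx => hx⟩
  · have hblocks := hH.setOf_isBlock_eq hrefl htrans
    refine ⟨isIrredundant_iff.2 ⟨isCovering_setOf_isBlock (approx_refl hrefl), ?_⟩,
      fun x => ?_⟩
    · rw [hblocks]
      rintro _ ⟨m, hm, rfl⟩
      exact ⟨m, hrefl m, fun _ ⟨_, _, hY⟩ hmY => hY ▸ hm.upset_eq_of_mem htrans (hY ▸ hmY)⟩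
    · obtain ⟨B, hB, hxB⟩ := exists_isBlock_mem (approx_refl hrefl x)
      obtain ⟨m, hm, rfl⟩ := hblocks.subset hB
      exact ⟨m, hm, hxB⟩
  · rintro ⟨hirr, hbdd⟩
    refine helly2_iff_forall_isBlock.2 fun B hB => ?_
    obtain ⟨x, -, hxB⟩ := (isIrredundant_iff.1 hirr).2 B hB
    obtain ⟨m, hm, hmx⟩ := hbdd x
    have hB_eq : upset le m = B := hxB _ (isBlock_upset hrefl htrans hm) hmx
    exact ⟨m, fun y hy => show y ∈ upset le m from hB_eq ▸ hy⟩
end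

section
/- Let (U, ≲) be a finite quasiordered set. The Helly number of (U, ≲) is 2 if and only if for all minimal elements a₁, a₂, a₃, if the pairwise intersections ↑a₁ ∩ ↑a₂, ↑a₁ ∩ ↑a₃, ↑a₂ ∩ ↑a₃ are all nonempty, then there exists a minimal element a with (↑a₁ ∩ ↑a₂) ∪ (↑a₁ ∩ ↑a₃) ∪ (↑a₂ ∩ ↑a₃) ⊆ ↑a. -/
/-!
Given Helly number 2, apply it to `(↑a₁ ∩ ↑a₂) ∪ (↑a₁ ∩ ↑a₃) ∪ (↑a₂ ∩ ↑a₃)`: any two of its points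
lie in a common `↑aᵢ`. Conversely, induct on the size of a finite family `s` with pairwise lower
bounds. If `x₁, x₂, x₃ ∈ s` are distinct, induction gives minimal common lower bounds `aᵢ`
of `s \ {xᵢ}`; the point `xᵢ` shows that the upsets of the other two meet, and every point of `s`
lies in two of the `↑aᵢ`, hence above the minimal element supplied by the triangle condition.
-/

variable {α : Type*}

def MinimalTriangleCondition (le : α → α → Prop) : Prop :=
  ∀ a₁ a₂ a₃, QMinimal le a₁ → QMinimal le a₂ → QMinimal le a₃ →
    (upset le a₁ ∩ upset le a₂).Nonempty →
    (upset le a₁ ∩ upset le a₃).Nonempty →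
    (upset le a₂ ∩ upset le a₃).Nonempty →
    ∃ a, QMinimal le a ∧
      (upset le a₁ ∩ upset le a₂) ∪ (upset le a₁ ∩ upset le a₃) ∪
        (upset le a₂ ∩ upset le a₃) ⊆ upset le a

theorem Finset.exists_subset_pair_of_card_le_two [DecidableEq α] {s : Finset α} (hs : s.Nonempty)
    (hcard : s.card ≤ 2) : ∃ x ∈ s, ∃ y ∈ s, s ⊆ {x, y} := by
  obtain h | h : s.card = 1 ∨ s.card = 2 := by have := hs.card_pos; omega
  · obtain ⟨a, rfl⟩ := Finset.card_eq_one.1 h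
    exact ⟨a, by simp, a, by simp, by simp⟩
  · obtain ⟨x, y, -, rfl⟩ := Finset.card_eq_two.1 h
    exact ⟨x, by simp, y, by simp, subset_rfl⟩

section

variable {le : α → α → Prop}

theorem boundedByMinimals_of_finite [Finite α] (hrefl : Reflexive le) (htrans : Transitive le) :
    BoundedByMinimals le := by
  intro x
  let lt : α → α → Prop := fun a b => le a b ∧ ¬ le b a
  have : IsTrans α lt :=
    ⟨fun _ _ _ hab hbc => ⟨htrans hab.1 hbc.1, fun h => hab.2 (htrans hbc.1 h)⟩⟩
  have : Std.Irrefl lt := ⟨fun _ h => h.2 h.1⟩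
  obtain ⟨m, hmx, hm⟩ :=
    (Finite.wellFounded_of_trans_of_irrefl lt).has_min {y | le y x} ⟨x, hrefl x⟩
  exact ⟨m, fun y hy => by_contra fun hmy => hm y (htrans hy hmx) ⟨hy, hmy⟩, hmx⟩

theorem MinimalTriangleCondition.of_helly2 (htrans : Transitive le)
    (hmin : BoundedByMinimals le) (H : Helly2 le) : MinimalTriangleCondition le := by
  intro a₁ a₂ a₃ _ _ _ ⟨x₀, hx₀⟩ _ _
  obtain ⟨b, hb⟩ := H ((upset le a₁ ∩ upset le a₂) ∪ (upset le a₁ ∩ upset le a₃) ∪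
      (upset le a₂ ∩ upset le a₃)) ⟨x₀, Or.inl (Or.inl hx₀)⟩ (by
    rintro x ((⟨hx, hx'⟩ | ⟨hx, hx'⟩) | ⟨hx, hx'⟩) y ((⟨hy, hy'⟩ | ⟨hy, hy'⟩) | ⟨hy, hy'⟩) <;>
      first
        | exact ⟨_, hx, hy⟩ | exact ⟨_, hx, hy'⟩ | exact ⟨_, hx', hy⟩ | exact ⟨_, hx', hy'⟩)
  obtain ⟨m, hm, hmb⟩ := hmin b
  exact ⟨m, hm, fun x hx => htrans hmb (hb x hx)⟩

theorem MinimalTriangleCondition.exists_forall_le_of_forall_erase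
    [DecidableEq α] (H : MinimalTriangleCondition le) {s : Finset α} {x₁ x₂ x₃ a₁ a₂ a₃ : α}
    (h₁ : x₁ ∈ s) (h₂ : x₂ ∈ s) (h₃ : x₃ ∈ s) (h₁₂ : x₁ ≠ x₂) (h₁₃ : x₁ ≠ x₃) (h₂₃ : x₂ ≠ x₃)
    (ha₁ : QMinimal le a₁) (ha₂ : QMinimal le a₂) (ha₃ : QMinimal le a₃)
    (hs₁ : ∀ x ∈ s.erase x₁, le a₁ x) (hs₂ : ∀ x ∈ s.erase x₂, le a₂ x)
    (hs₃ : ∀ x ∈ s.erase x₃, le a₃ x) :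
    ∃ a, QMinimal le a ∧ ∀ x ∈ s, le a x := by
  have m₂₃ : x₁ ∈ upset le a₂ ∩ upset le a₃ :=
    ⟨hs₂ x₁ (Finset.mem_erase.2 ⟨h₁₂, h₁⟩), hs₃ x₁ (Finset.mem_erase.2 ⟨h₁₃, h₁⟩)⟩
  have m₁₃ : x₂ ∈ upset le a₁ ∩ upset le a₃ :=
    ⟨hs₁ x₂ (Finset.mem_erase.2 ⟨h₁₂.symm, h₂⟩), hs₃ x₂ (Finset.mem_erase.2 ⟨h₂₃, h₂⟩)⟩
  have m₁₂ : x₃ ∈ upset le a₁ ∩ upset le a₂ :=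
    ⟨hs₁ x₃ (Finset.mem_erase.2 ⟨h₁₃.symm, h₃⟩), hs₂ x₃ (Finset.mem_erase.2 ⟨h₂₃.symm, h₃⟩)⟩
  obtain ⟨a, ha, hsub⟩ := H a₁ a₂ a₃ ha₁ ha₂ ha₃ ⟨x₃, m₁₂⟩ ⟨x₂, m₁₃⟩ ⟨x₁, m₂₃⟩
  refine ⟨a, ha, fun x hx => hsub ?_⟩
  rcases eq_or_ne x x₁ with rfl | hx₁
  · exact Or.inr m₂₃
  rcases eq_or_ne x x₂ with rfl | hx₂
  · exact Or.inl (Or.inr m₁₃)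
  exact Or.inl (Or.inl ⟨hs₁ x (Finset.mem_erase.2 ⟨hx₁, hx⟩), hs₂ x (Finset.mem_erase.2 ⟨hx₂, hx⟩)⟩)

theorem MinimalTriangleCondition.exists_forall_le (htrans : Transitive le)
    (hmin : BoundedByMinimals le) (H : MinimalTriangleCondition le) (s : Finset α)
    (hs : s.Nonempty) (hpair : ∀ x ∈ s, ∀ y ∈ s, approx le x y) :
    ∃ a, QMinimal le a ∧ ∀ x ∈ s, le a x := by
  classical
  induction s using Finset.strongInduction with
  | H s ih =>
    by_cases hcard : 2 < s.card
    · have herase : ∀ z ∈ s, ∃ a, QMinimal le a ∧ ∀ x ∈ s.erase z, le a x := fun z hz =>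
        ih _ (Finset.erase_ssubset hz)
          (Finset.card_pos.1 (by rw [Finset.card_erase_of_mem hz]; omega))
          (fun x hx y hy => hpair x (Finset.mem_of_mem_erase hx) y (Finset.mem_of_mem_erase hy))
      obtain ⟨x₁, h₁, x₂, h₂, x₃, h₃, h₁₂, h₁₃, h₂₃⟩ := Finset.two_lt_card.1 hcard
      obtain ⟨a₁, ha₁, hs₁⟩ := herase x₁ h₁
      obtain ⟨a₂, ha₂, hs₂⟩ := herase x₂ h₂
      obtain ⟨a₃, ha₃, hs₃⟩ := herase x₃ h₃
      exact H.exists_forall_le_of_forall_erase h₁ h₂ h₃ h₁₂ h₁₃ h₂₃ ha₁ ha₂ ha₃ hs₁ hs₂ hs₃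
    · obtain ⟨x, hx, y, hy, hxy⟩ := Finset.exists_subset_pair_of_card_le_two hs (not_lt.1 hcard)
      obtain ⟨b, hbx, hby⟩ := hpair x hx y hy
      obtain ⟨m, hm, hmb⟩ := hmin b
      refine ⟨m, hm, fun z hz => ?_⟩
      rcases Finset.mem_insert.1 (hxy hz) with rfl | hz
      · exact htrans hmb hbx
      rw [Finset.mem_singleton.1 hz]
      exact htrans hmb hby

theorem MinimalTriangleCondition.helly2 [Finite α] (htrans : Transitive le)
    (hmin : BoundedByMinimals le) (H : MinimalTriangleCondition le) : Helly2 le := by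
  intro A hA hpair
  obtain ⟨a, -, ha⟩ := H.exists_forall_le htrans hmin A.toFinite.toFinset (by simpa using hA)
    fun x hx y hy => hpair x (by simpa using hx) y (by simpa using hy)
  exact ⟨a, by simpa using ha⟩

end

theorem stmt17 [Finite α] (le : α → α → Prop) (hrefl : Reflexive le)
    (htrans : Transitive le) :
    Helly2 le ↔
      ∀ a₁ a₂ a₃, QMinimal le a₁ → QMinimal le a₂ → QMinimal le a₃ →
        (upset le a₁ ∩ upset le a₂).Nonempty →
        (upset le a₁ ∩ upset le a₃).Nonempty →
        (upset le a₂ ∩ upset le a₃).Nonempty →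
        ∃ a, QMinimal le a ∧
          (upset le a₁ ∩ upset le a₂) ∪ (upset le a₁ ∩ upset le a₃) ∪
            (upset le a₂ ∩ upset le a₃) ⊆ upset le a := by
  have hmin := boundedByMinimals_of_finite hrefl htrans
  exact ⟨MinimalTriangleCondition.of_helly2 htrans hmin,
    MinimalTriangleCondition.helly2 htrans hmin⟩
end

section
/- Let L be a finite distributive lattice with least element 0. The Helly number of the partially ordered set (L \ {0}, ≤) is 2 if and only if L has at most two distinct atoms. -/
variable {α : Type*}

/-!
If `a`, `b`, `c` are distinct atoms, any two of `a ⊔ b`, `a ⊔ c`, `b ⊔ c` lie above a common atom,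
while by distributivity their meet is `(a ⊔ b ⊓ c) ⊓ (b ⊔ c) = a ⊓ (b ⊔ c) = ⊥`. Conversely, with at
most two atoms: if an atom `m` lies below some member of `A` but not below `x₁ ∈ A`, then each atom
below `x₁` lies below all of `A`, since a nonzero common lower bound of `x` and `x₁` lies above an atom
of `x₁`, which is not `m`.
-/

section Atoms

variable {L : Type*}

theorem sup_inf_sup_inf_sup_eq_bot_of_isAtom [DistribLattice L] [OrderBot L] {a b c : L}
    (ha : IsAtom a) (hb : IsAtom b) (hc : IsAtom c) (hab : a ≠ b) (hac : a ≠ c) (hbc : b ≠ c) :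
    (a ⊔ b) ⊓ (a ⊔ c) ⊓ (b ⊔ c) = ⊥ := by
  rw [← sup_inf_left, disjoint_iff.mp (hb.disjoint_of_ne hc hbc), sup_bot_eq, inf_sup_left,
    disjoint_iff.mp (ha.disjoint_of_ne hb hab), disjoint_iff.mp (ha.disjoint_of_ne hc hac),
    sup_bot_eq]

theorem exists_ne_bot_forall_le_of_isAtom_eq [PartialOrder L] [OrderBot L] [IsAtomic L]
    (hatoms : ∀ a b c : L, IsAtom a → IsAtom b → IsAtom c → a = b ∨ a = c ∨ b = c)
    {A : Set L} (hA : A.Nonempty) (hpair : ∀ x ∈ A, ∀ y ∈ A, ∃ a, a ≠ ⊥ ∧ a ≤ x ∧ a ≤ y) :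
    ∃ a, a ≠ ⊥ ∧ ∀ x ∈ A, a ≤ x := by
  have exists_atom_le_of_lower_bound {x y : L} (h : ∃ a, a ≠ ⊥ ∧ a ≤ x ∧ a ≤ y) :
      ∃ n, IsAtom n ∧ n ≤ x ∧ n ≤ y := by
    obtain ⟨a, ha, hax, hay⟩ := h
    obtain ⟨n, hn, hna⟩ := (eq_bot_or_exists_atom_le a).resolve_left ha
    exact ⟨n, hn, hna.trans hax, hna.trans hay⟩
  obtain ⟨x₀, hx₀⟩ := hA
  obtain ⟨m, hm, hmx₀, -⟩ := exists_atom_le_of_lower_bound (hpair x₀ hx₀ x₀ hx₀)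
  by_cases hall : ∀ x ∈ A, m ≤ x
  · exact ⟨m, hm.1, hall⟩
  push Not at hall
  obtain ⟨x₁, hx₁, hmx₁⟩ := hall
  obtain ⟨m', hm', hm'x₁, -⟩ := exists_atom_le_of_lower_bound (hpair x₁ hx₁ x₁ hx₁)
  refine ⟨m', hm'.1, fun x hx => ?_⟩
  obtain ⟨n, hn, hnx, hnx₁⟩ := exists_atom_le_of_lower_bound (hpair x hx x₁ hx₁)
  rcases hatoms n m m' hn hm hm' with rfl | rfl | rfl
  · exact absurd hnx₁ hmx₁
  · exact hnx
  · exact absurd hm'x₁ hmx₁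

end Atoms

theorem stmt19 (L : Type*) [DistribLattice L] [OrderBot L] [Finite L] :
    (∀ A : Set L, A.Nonempty → (∀ x ∈ A, x ≠ ⊥) →
        (∀ x ∈ A, ∀ y ∈ A, ∃ a, a ≠ ⊥ ∧ a ≤ x ∧ a ≤ y) →
        ∃ a, a ≠ ⊥ ∧ ∀ x ∈ A, a ≤ x) ↔
      ∀ a b c : L, IsAtom a → IsAtom b → IsAtom c → a = b ∨ a = c ∨ b = c := by
  refine ⟨fun helly a b c ha hb hc => ?_,
    fun hatoms A hA _ hpair => exists_ne_bot_forall_le_of_isAtom_eq hatoms hA hpair⟩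
  by_contra! ⟨hab, hac, hbc⟩
  obtain ⟨d, hd, hdle⟩ := helly {a ⊔ b, a ⊔ c, b ⊔ c} (by simp)
    (by simp [ha.1, hb.1])
    (by
      rintro x (rfl | rfl | rfl) y (rfl | rfl | rfl) <;>
        first
        | (refine ⟨a, ha.1, ?_, ?_⟩ <;> simp)
        | (refine ⟨b, hb.1, ?_, ?_⟩ <;> simp)
        | (refine ⟨c, hc.1, ?_, ?_⟩ <;> simp))
  refine hd (le_bot_iff.mp ?_)
  rw [← sup_inf_sup_inf_sup_eq_bot_of_isAtom ha hb hc hab hac hbc]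
  exact le_inf (le_inf (hdle _ (by simp)) (hdle _ (by simp))) (hdle _ (by simp))
end
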